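/- The total unsigned row sum of the Matsunaga numbers is asymptotic to β_n · n!: the ratio (Σ_{k=1}^{n} |M_{n,k}|) / (β_n · n!) tends to 1 as n → ∞. -/

import Mathlib

open Finset

/-- A set partition of `Fin n`: a finite family of nonempty blocks such that
every element lies in exactly one block. -/
def IsSetPartition {n : ℕ} (P : Finset (Finset (Fin n))) : Prop :=
  (∀ B ∈ P, B.Nonempty) ∧ ∀ x : Fin n, ∃! B, B ∈ P ∧ x ∈ B

/-- The Bell number `B n`: the number of set partitions of an `n`-element set. -/
noncomputable def bell (n : ℕ) : ℕ :=
  Nat.card {P : Finset (Finset (Fin n)) // IsSetPartition P}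

/-- `beta n`: the number of set partitions of an `n`-element set with no singleton blocks. -/
noncomputable def beta (n : ℕ) : ℕ :=
  Nat.card {P : Finset (Finset (Fin n)) // IsSetPartition P ∧ ∀ B ∈ P, 2 ≤ B.card}

/-- Signed Stirling numbers of the first kind, defined by
`∑ k, stirS n k * z ^ k = z (z-1) ⋯ (z-n+1)`. -/
def stirS : ℕ → ℕ → ℤ
  | 0, 0 => 1
  | 0, _ + 1 => 0
  | _ + 1, 0 => 0
  | n + 1, k + 1 => stirS n k - (n : ℤ) * stirS n (k + 1)

/-- Unsigned Stirling numbers of the first kind (number of permutations of `n`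
elements with `k` cycles). -/
def stirU : ℕ → ℕ → ℕ
  | 0, 0 => 1
  | 0, _ + 1 => 0
  | _ + 1, 0 => 0
  | n + 1, k + 1 => stirU n k + n * stirU n (k + 1)

/-- The Matsunaga numbers `M n k`, defined by the recurrence
`M n k = n * M (n-1) k + beta n * stirS n k` for `1 ≤ k ≤ n`, and `0` whenever
`n ≤ 1`, `k ≤ 0` or `k > n`. -/
noncomputable def matsunaga : ℕ → ℕ → ℤ
  | 0, _ => 0
  | 1, _ => 0
  | n + 2, k =>
      if 1 ≤ k ∧ k ≤ n + 2 then
        ((n : ℤ) + 2) * matsunaga (n + 1) k + (beta (n + 2) : ℤ) * stirS (n + 2) k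
      else 0

open Classical in
noncomputable def partsOn {N : ℕ} (S : Finset (Fin N)) : Finset (Finset (Finset (Fin N))) :=
  univ.filter (fun P => (∀ B ∈ P, B ⊆ S ∧ 2 ≤ B.card) ∧ ∀ x ∈ S, ∃! B, B ∈ P ∧ x ∈ B)

lemma mem_partsOn {N : ℕ} {S : Finset (Fin N)} {P : Finset (Finset (Fin N))} :
    P ∈ partsOn S ↔ (∀ B ∈ P, B ⊆ S ∧ 2 ≤ B.card) ∧ ∀ x ∈ S, ∃! B, B ∈ P ∧ x ∈ B := by
  classical
  simp [partsOn]


lemma beta_eq_card_partsOn (n : ℕ) : beta n = (partsOn (univ : Finset (Fin n))).card := by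
  classical
  rw [beta, Nat.card_eq_fintype_card, Fintype.card_subtype]
  congr 1
  apply Finset.filter_congr
  intro P _
  simp only [partsOn, IsSetPartition, mem_filter, mem_univ, true_and, eq_iff_iff]
  constructor
  · rintro ⟨⟨h1, h2⟩, h3⟩
    exact ⟨fun B hB => ⟨subset_univ _, h3 B hB⟩, fun x _ => h2 x⟩
  · rintro ⟨h1, h2⟩
    refine ⟨⟨fun B hB => ?_, fun x => h2 x trivial⟩, fun B hB => (h1 B hB).2⟩
    have := (h1 B hB).2
    exact Finset.card_pos.mp (by omega)

lemma card_partsOn {N : ℕ} (S : Finset (Fin N)) :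
    (partsOn (univ : Finset (Fin S.card))).card = (partsOn S).card := by
  classical
  set f : Fin S.card → Fin N := fun i => (S.orderIsoOfFin rfl i : Fin N) with hf
  have hfinj : Function.Injective f := by
    intro a b hab
    have := (S.orderIsoOfFin rfl).injective (Subtype.ext hab)
    exact this
  have hfS : ∀ i, f i ∈ S := fun i => (S.orderIsoOfFin rfl i).2
  have hsurj : ∀ x ∈ S, ∃ i, f i = x := by
    intro x hx
    refine ⟨(S.orderIsoOfFin rfl).symm ⟨x, hx⟩, ?_⟩
    show ((S.orderIsoOfFin rfl) ((S.orderIsoOfFin rfl).symm ⟨x, hx⟩) : Fin N) = x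
    rw [OrderIso.apply_symm_apply]
  apply Finset.card_bij (fun Q _ => Q.image (fun D => D.image f))
  · -- maps into partsOn S
    intro Q hQ
    rw [mem_partsOn] at hQ ⊢
    obtain ⟨hQ1, hQ2⟩ := hQ
    constructor
    · intro B hB
      rw [mem_image] at hB
      obtain ⟨D, hD, rfl⟩ := hB
      refine ⟨fun x hx => ?_, ?_⟩
      · rw [mem_image] at hx; obtain ⟨i, _, rfl⟩ := hx; exact hfS i
      · rw [Finset.card_image_of_injective _ hfinj]; exact (hQ1 D hD).2
    · intro x hx
      obtain ⟨i, rfl⟩ := hsurj x hx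
      obtain ⟨D, ⟨hD, hiD⟩, huniq⟩ := hQ2 i (mem_univ i)
      refine ⟨D.image f, ⟨mem_image_of_mem _ hD, mem_image_of_mem _ hiD⟩, ?_⟩
      rintro B ⟨hB, hfB⟩
      rw [mem_image] at hB
      obtain ⟨D', hD', rfl⟩ := hB
      rw [mem_image] at hfB
      obtain ⟨i', hi', hii⟩ := hfB
      have : i' = i := hfinj hii
      subst this
      rw [huniq D' ⟨hD', hi'⟩]
  · -- injective
    intro Q1 h1 Q2 h2 h
    exact Finset.image_injective (Finset.image_injective hfinj) h
  · -- surjective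
    intro P hP
    rw [mem_partsOn] at hP
    obtain ⟨hP1, hP2⟩ := hP
    refine ⟨P.image (fun B => univ.filter (fun i => f i ∈ B)), ?_, ?_⟩
    · rw [mem_partsOn]
      have himg : ∀ B ∈ P, (univ.filter (fun i => f i ∈ B)).image f = B := by
        intro B hB
        ext y
        simp only [mem_image, mem_filter, mem_univ, true_and]
        constructor
        · rintro ⟨i, hi, rfl⟩; exact hi
        · intro hy
          obtain ⟨i, rfl⟩ := hsurj y ((hP1 B hB).1 hy)
          exact ⟨i, hy, rfl⟩
      constructor
      · intro D hD
        rw [mem_image] at hD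
        obtain ⟨B, hB, rfl⟩ := hD
        refine ⟨subset_univ _, ?_⟩
        have : (univ.filter (fun i => f i ∈ B)).card = B.card := by
          conv_rhs => rw [← himg B hB]
          rw [Finset.card_image_of_injective _ hfinj]
        rw [this]; exact (hP1 B hB).2
      · intro i _
        obtain ⟨B, ⟨hB, hfiB⟩, huniq⟩ := hP2 (f i) (hfS i)
        refine ⟨univ.filter (fun j => f j ∈ B), ⟨mem_image_of_mem _ hB, by simp [hfiB]⟩, ?_⟩
        rintro D ⟨hD, hiD⟩
        rw [mem_image] at hD
        obtain ⟨B', hB', rfl⟩ := hD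
        rw [mem_filter] at hiD
        rw [huniq B' ⟨hB', hiD.2⟩]
    · rw [Finset.image_image]
      have : ∀ B ∈ P, ((fun D => D.image f) ∘ (fun B => univ.filter (fun i => f i ∈ B))) B = id B := by
        intro B hB
        simp only [Function.comp, id]
        ext y
        simp only [mem_image, mem_filter, mem_univ, true_and]
        constructor
        · rintro ⟨i, hi, rfl⟩; exact hi
        · intro hy
          obtain ⟨i, rfl⟩ := hsurj y ((hP1 B hB).1 hy)
          exact ⟨i, hy, rfl⟩
      rw [Finset.image_congr this, Finset.image_id]

lemma beta_card_partsOn {N : ℕ} (S : Finset (Fin N)) : (partsOn S).card = beta S.card := by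
  rw [beta_eq_card_partsOn S.card]; exact (card_partsOn S).symm

noncomputable def blockOf {n : ℕ} (P : Finset (Finset (Fin (n+1)))) : Finset (Fin (n+1)) :=
  univ.filter (fun x => ∃ B ∈ P, Fin.last n ∈ B ∧ x ∈ B)

lemma blockOf_eq {n : ℕ} {P : Finset (Finset (Fin (n+1)))} {B : Finset (Fin (n+1))}
    (hP : P ∈ partsOn (univ : Finset (Fin (n+1)))) (hB : B ∈ P) (hlast : Fin.last n ∈ B) :
    blockOf P = B := by
  classical
  rw [mem_partsOn] at hP
  ext x
  simp only [blockOf, mem_filter, mem_univ, true_and]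
  constructor
  · rintro ⟨B', hB', hlast', hx⟩
    obtain ⟨C, _, huniq⟩ := hP.2 (Fin.last n) (mem_univ _)
    have h1 : B' = C := huniq B' ⟨hB', hlast'⟩
    have h2 : B = C := huniq B ⟨hB, hlast⟩
    rw [h1, ← h2] at hx; exact hx
  · intro hx
    exact ⟨B, hB, hlast, hx⟩

lemma card_fiber {n : ℕ} {B : Finset (Fin (n+1))} (hlast : Fin.last n ∈ B) (hcard : 2 ≤ B.card) :
    ((partsOn (univ : Finset (Fin (n+1)))).filter (fun P => blockOf P = B)).card
      = (partsOn Bᶜ).card := by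
  classical
  refine Finset.card_bij' (fun P _ => P.erase B) (fun Q _ => insert B Q) ?hi ?hj ?left ?right
  case hi => -- maps into partsOn Bᶜ
    intro P hP
    rw [mem_filter] at hP
    obtain ⟨hP, hfib⟩ := hP
    have hPmem := hP
    rw [mem_partsOn] at hP
    have hBP : B ∈ P := by
      obtain ⟨C, ⟨hC, hlC⟩, _⟩ := hP.2 (Fin.last n) (mem_univ _)
      have : blockOf P = C := blockOf_eq hPmem hC hlC
      rw [hfib] at this; rw [this]; exact hC
    rw [mem_partsOn]
    constructor
    · intro C hC
      rw [mem_erase] at hC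
      refine ⟨fun x hx => ?_, (hP.1 C hC.2).2⟩
      rw [Finset.mem_compl]
      intro hxB
      obtain ⟨D, _, huniq⟩ := hP.2 x (mem_univ _)
      have h1 : C = D := huniq C ⟨hC.2, hx⟩
      have h2 : B = D := huniq B ⟨hBP, hxB⟩
      exact hC.1 (h1.trans h2.symm)
    · intro x hx
      rw [Finset.mem_compl] at hx
      obtain ⟨C, ⟨hC, hxC⟩, huniq⟩ := hP.2 x (mem_univ _)
      have hCB : C ≠ B := fun h => hx (h ▸ hxC)
      refine ⟨C, ⟨mem_erase.mpr ⟨hCB, hC⟩, hxC⟩, ?_⟩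
      rintro D ⟨hD, hxD⟩
      exact huniq D ⟨(mem_erase.mp hD).2, hxD⟩
  case hj => -- inverse maps into fiber
    intro Q hQ
    rw [mem_partsOn] at hQ
    have hBQ : B ∉ Q := by
      intro h
      have := (hQ.1 B h).1 hlast
      rw [Finset.mem_compl] at this
      exact this hlast
    have hins : insert B Q ∈ partsOn (univ : Finset (Fin (n+1))) := by
      rw [mem_partsOn]
      constructor
      · intro C hC
        rcases Finset.mem_insert.mp hC with rfl | hC
        · exact ⟨subset_univ _, hcard⟩
        · exact ⟨subset_univ _, (hQ.1 C hC).2⟩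
      · intro x _
        by_cases hxB : x ∈ B
        · refine ⟨B, ⟨mem_insert_self _ _, hxB⟩, ?_⟩
          rintro D ⟨hD, hxD⟩
          rcases Finset.mem_insert.mp hD with rfl | hD
          · rfl
          · exact absurd ((hQ.1 D hD).1 hxD) (by simp [hxB])
        · have hxc : x ∈ Bᶜ := Finset.mem_compl.mpr hxB
          obtain ⟨C, ⟨hC, hxC⟩, huniq⟩ := hQ.2 x hxc
          refine ⟨C, ⟨mem_insert_of_mem hC, hxC⟩, ?_⟩
          rintro D ⟨hD, hxD⟩
          rcases Finset.mem_insert.mp hD with rfl | hD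
          · exact absurd hxD hxB
          · exact huniq D ⟨hD, hxD⟩
    rw [mem_filter]
    exact ⟨hins, blockOf_eq hins (mem_insert_self _ _) hlast⟩
  case left =>
    intro P hP
    rw [mem_filter] at hP
    have hPmem := hP.1
    have hfib := hP.2
    rw [mem_partsOn] at hPmem
    have hBP : B ∈ P := by
      obtain ⟨C, ⟨hC, hlC⟩, _⟩ := hPmem.2 (Fin.last n) (mem_univ _)
      have : blockOf P = C := blockOf_eq hP.1 hC hlC
      rw [hfib] at this; rw [this]; exact hC
    exact Finset.insert_erase hBP
  case right =>
    intro Q hQ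
    rw [mem_partsOn] at hQ
    have hBQ : B ∉ Q := by
      intro h
      have := (hQ.1 B h).1 hlast
      rw [Finset.mem_compl] at this
      exact this hlast
    exact Finset.erase_insert hBQ

lemma beta_succ (n : ℕ) : beta (n + 1) = ∑ j ∈ range n, n.choose j * beta j := by
  classical
  have h1 : beta (n+1) = (partsOn (univ : Finset (Fin (n+1)))).card := beta_eq_card_partsOn _
  set 𝒮 := (univ : Finset (Finset (Fin (n+1)))).filter (fun B => Fin.last n ∈ B ∧ 2 ≤ B.card)
    with h𝒮
  have hmap : ∀ P ∈ partsOn (univ : Finset (Fin (n+1))), blockOf P ∈ 𝒮 := by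
    intro P hP
    have hP' := hP
    rw [mem_partsOn] at hP'
    obtain ⟨C, ⟨hC, hlC⟩, _⟩ := hP'.2 (Fin.last n) (mem_univ _)
    have hb : blockOf P = C := blockOf_eq hP hC hlC
    rw [h𝒮, mem_filter, hb]
    exact ⟨mem_univ _, hlC, (hP'.1 C hC).2⟩
  have h2 := Finset.card_eq_sum_card_fiberwise hmap
  have h3 : ∀ B ∈ 𝒮, ((partsOn (univ : Finset (Fin (n+1)))).filter (fun P => blockOf P = B)).card
      = beta (n + 1 - B.card) := by
    intro B hB
    rw [h𝒮, mem_filter] at hB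
    rw [card_fiber hB.2.1 hB.2.2, beta_card_partsOn]
    congr 1
    rw [Finset.card_compl]
    simp
  -- reindex over A = B.erase last
  set t := (univ : Finset (Fin (n+1))).erase (Fin.last n) with ht
  have htcard : t.card = n := by
    rw [ht, Finset.card_erase_of_mem (mem_univ _)]
    simp
  set T := t.powerset.filter (fun A => A.Nonempty) with hT
  have h𝒮T : 𝒮 = T.image (insert (Fin.last n)) := by
    ext B
    rw [h𝒮, mem_filter, mem_image]
    constructor
    · rintro ⟨-, hlB, hcB⟩
      refine ⟨B.erase (Fin.last n), ?_, Finset.insert_erase hlB⟩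
      rw [hT, mem_filter, mem_powerset]
      refine ⟨Finset.erase_subset_erase _ (subset_univ _), ?_⟩
      rw [← Finset.card_pos, Finset.card_erase_of_mem hlB]
      omega
    · rintro ⟨A, hA, rfl⟩
      rw [hT, mem_filter, mem_powerset] at hA
      have hlA : Fin.last n ∉ A := fun h => (Finset.mem_erase.mp (hA.1 h)).1 rfl
      refine ⟨mem_univ _, mem_insert_self _ _, ?_⟩
      rw [Finset.card_insert_of_notMem hlA]
      have := Finset.card_pos.mpr hA.2
      omega
  have hinj : ∀ A ∈ T, ∀ A' ∈ T, insert (Fin.last n) A = insert (Fin.last n) A' → A = A' := by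
    intro A hA A' hA' h
    rw [hT, mem_filter, mem_powerset] at hA hA'
    have hlA : Fin.last n ∉ A := fun hh => (Finset.mem_erase.mp (hA.1 hh)).1 rfl
    have hlA' : Fin.last n ∉ A' := fun hh => (Finset.mem_erase.mp (hA'.1 hh)).1 rfl
    rw [← Finset.erase_insert hlA, ← Finset.erase_insert hlA', h]
  have h4 : ∀ A ∈ T, beta (n + 1 - (insert (Fin.last n) A).card) = beta (n - A.card) := by
    intro A hA
    rw [hT, mem_filter, mem_powerset] at hA
    have hlA : Fin.last n ∉ A := fun hh => (Finset.mem_erase.mp (hA.1 hh)).1 rfl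
    rw [Finset.card_insert_of_notMem hlA]
    congr 1
    omega
  -- add the empty set back
  have hsplit : (∑ A ∈ T, beta (n - A.card)) + beta n
      = ∑ A ∈ t.powerset, beta (n - A.card) := by
    rw [← Finset.sum_filter_add_sum_filter_not t.powerset (fun A => A.Nonempty)
      (fun A => beta (n - A.card))]
    congr 1
    have : t.powerset.filter (fun A => ¬A.Nonempty) = {∅} := by
      ext A
      simp only [mem_filter, mem_powerset, Finset.not_nonempty_iff_eq_empty, mem_singleton]
      constructor
      · rintro ⟨-, rfl⟩; rfl
      · rintro rfl; exact ⟨Finset.empty_subset _, rfl⟩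
    rw [this, Finset.sum_singleton]
    simp
  have hpow : ∑ A ∈ t.powerset, beta (n - A.card)
      = ∑ j ∈ range (n + 1), n.choose j * beta (n - j) := by
    rw [Finset.sum_powerset, htcard]
    apply Finset.sum_congr rfl
    intro j hj
    have : ∀ A ∈ Finset.powersetCard j t, beta (n - A.card) = beta (n - j) := by
      intro A hA
      rw [(Finset.mem_powersetCard.mp hA).2]
    rw [Finset.sum_congr rfl this, Finset.sum_const, Finset.card_powersetCard, htcard,
      smul_eq_mul]
  have key : beta (n+1) + beta n = ∑ j ∈ range (n + 1), n.choose j * beta (n - j) := by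
    rw [h1, h2, Finset.sum_congr rfl h3, h𝒮T, Finset.sum_image hinj,
      Finset.sum_congr rfl h4, hsplit, hpow]
  rw [Finset.sum_range_succ'] at key
  simp only [Nat.choose_zero_right, Nat.sub_zero, one_mul] at key
  have key2 : beta (n+1) = ∑ j ∈ range n, n.choose (j+1) * beta (n - (j+1)) :=
    Nat.add_right_cancel key
  rw [key2, ← Finset.sum_range_reflect]
  apply Finset.sum_congr rfl
  intro j hj
  rw [mem_range] at hj
  have e1 : n - 1 - j + 1 = n - j := by omega
  have e2 : n - (n - j) = j := by omega
  rw [e1, e2, Nat.choose_symm (by omega)]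



lemma stirU_gt : ∀ {n k : ℕ}, n < k → stirU n k = 0 := by
  intro n
  induction n with
  | zero => intro k hk; match k, hk with | k+1, _ => rfl
  | succ m ih =>
    intro k hk
    match k, hk with
    | k+1, hk =>
      show stirU m k + m * stirU m (k+1) = 0
      rw [ih (by omega), ih (by omega)]; simp
  
lemma sum_stirU : ∀ n : ℕ, ∑ k ∈ range (n+1), stirU n k = n.factorial := by
  intro n
  induction n with
  | zero => decide
  | succ m ih =>
    have h0 : stirU (m+1) 0 = 0 := rfl
    have hstep : ∀ k, stirU (m+1) (k+1) = stirU m k + m * stirU m (k+1) := fun k => rfl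
    rw [Finset.sum_range_succ' (fun k => stirU (m+1) k) (m+1), h0]
    simp only [hstep, Finset.sum_add_distrib, ← Finset.mul_sum, add_zero]
    have h3 : m * (∑ k ∈ range (m+1), stirU m (k+1)) = m * m.factorial := by
      rcases m with _ | m'
      · simp
      · congr 1
        have ha : ∑ k ∈ range (m'+2), stirU (m'+1) (k+1)
            = ∑ k ∈ range (m'+1), stirU (m'+1) (k+1) := by
          rw [Finset.sum_range_succ, stirU_gt (by omega), add_zero]
        have hb : ∑ k ∈ range (m'+2), stirU (m'+1) k
            = ∑ k ∈ range (m'+1), stirU (m'+1) (k+1) + stirU (m'+1) 0 :=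
          Finset.sum_range_succ' _ _
        have h0' : stirU (m'+1) 0 = 0 := rfl
        rw [ha, ← ih, hb, h0', add_zero]
    rw [ih, h3, Nat.factorial_succ]
    ring

lemma stirS_sign : ∀ (n k : ℕ), stirS n k = (-1 : ℤ)^(n+k) * stirU n k := by
  intro n
  induction n with
  | zero =>
    intro k
    match k with
    | 0 => decide
    | k+1 => show (0 : ℤ) = _ * ((0 : ℕ) : ℤ); simp
  | succ m ih =>
    intro k
    match k with
    | 0 => show (0 : ℤ) = _ * ((0 : ℕ) : ℤ); simp
    | k+1 =>
      show stirS m k - (m : ℤ) * stirS m (k+1) = (-1 : ℤ)^(m+1+(k+1)) * (stirU m k + m * stirU m (k+1) : ℕ)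
      rw [ih k, ih (k+1)]
      have : (-1 : ℤ)^(m+1+(k+1)) = (-1)^(m+k) := by
        have : m+1+(k+1) = (m+k)+2 := by omega
        rw [this, pow_add]; norm_num
      rw [this]
      have h2 : (-1 : ℤ)^(m+(k+1)) = -(-1)^(m+k) := by
        have : m+(k+1) = (m+k)+1 := by omega
        rw [this, pow_succ]; ring
      rw [h2]
      push_cast
      ring

lemma abs_stirS (n k : ℕ) : |((stirS n k : ℤ) : ℝ)| = (stirU n k : ℝ) := by
  rw [stirS_sign]
  push_cast
  rw [abs_mul, abs_pow, abs_neg, abs_one, one_pow, one_mul, Nat.abs_cast]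

lemma sum_abs_stirS {n : ℕ} (hn : 1 ≤ n) :
    ∑ k ∈ Icc 1 n, |((stirS n k : ℤ) : ℝ)| = (n.factorial : ℝ) := by
  have h : range (n+1) = insert 0 (Icc 1 n) := by
    ext x; simp only [mem_range, mem_insert, mem_Icc]; omega
  have h2 : ∑ k ∈ range (n+1), (stirU n k : ℝ) = ((n.factorial : ℕ) : ℝ) := by
    rw [← Nat.cast_sum, sum_stirU]
  simp only [abs_stirS]
  rw [h, Finset.sum_insert (by simp)] at h2
  have h0 : stirU n 0 = 0 := by
    match n, hn with
    | m+1, _ => rfl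
  rw [h0] at h2
  simpa using h2
section BetaGrowth
open Finset

lemma one_le_beta_two : 1 ≤ beta 2 := by
  have hne : Nonempty {P : Finset (Finset (Fin 2)) // IsSetPartition P ∧ ∀ B ∈ P, 2 ≤ B.card} := by
    refine ⟨⟨{(univ : Finset (Fin 2))}, ⟨⟨?_, ?_⟩, ?_⟩⟩⟩
    · intro B hB
      rw [Finset.mem_singleton] at hB
      subst hB
      exact ⟨0, mem_univ 0⟩
    · intro x
      refine ⟨univ, ⟨Finset.mem_singleton_self _, mem_univ x⟩, ?_⟩
      rintro B ⟨hB, -⟩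
      rwa [Finset.mem_singleton] at hB
    · intro B hB
      rw [Finset.mem_singleton] at hB
      subst hB
      simp [Finset.card_univ]
  have : 0 < Nat.card {P : Finset (Finset (Fin 2)) // IsSetPartition P ∧ ∀ B ∈ P, 2 ≤ B.card} :=
    Nat.card_pos
  exact this

lemma beta_le_succ (n : ℕ) : beta (n+1) ≤ beta (n+2) := by
  rw [beta_succ n, beta_succ (n+1)]
  calc ∑ j ∈ range n, n.choose j * beta j
      ≤ ∑ j ∈ range n, (n+1).choose j * beta j := by
        apply Finset.sum_le_sum
        intro j _
        exact Nat.mul_le_mul_right _ (Nat.choose_le_choose j (by omega))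
    _ ≤ ∑ j ∈ range (n+1), (n+1).choose j * beta j :=
        Finset.sum_le_sum_of_subset (Finset.range_subset_range.mpr (by omega))

lemma one_le_beta {n : ℕ} (h : 2 ≤ n) : 1 ≤ beta n := by
  induction n, h using Nat.le_induction with
  | base => exact one_le_beta_two
  | succ m hm ih =>
    obtain ⟨k, rfl⟩ : ∃ k, m = k + 1 := ⟨m - 1, by omega⟩
    exact le_trans ih (beta_le_succ k)

lemma beta_two_step (j : ℕ) : (j+1) * beta j ≤ beta (j+2) := by
  rw [beta_succ (j+1)]
  have : (j+1).choose j * beta j ≤ ∑ i ∈ range (j+1), (j+1).choose i * beta i :=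
    Finset.single_le_sum (f := fun i => (j+1).choose i * beta i)
      (fun i _ => Nat.zero_le _) (Finset.mem_range.mpr (Nat.lt_succ_self j))
  rwa [Nat.choose_succ_self_right] at this

lemma amgm16 (s : ℕ) : 16 * s ≤ s * s + 64 := by
  have h : (16 : ℤ) * s ≤ s * s + 64 := by nlinarith [sq_nonneg ((s : ℤ) - 8)]
  exact_mod_cast h

lemma key_growth {n : ℕ} (hn : 64 ≤ n) :
    (n+1) * beta (n+1) ≤ 2 * (Nat.sqrt (2*(n+1)) + 4) * beta (n+2) := by
  have hs2 : 2*(n+1) < (Nat.sqrt (2*(n+1)) + 1) * (Nat.sqrt (2*(n+1)) + 1) := by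
    have := Nat.lt_succ_sqrt' (2*(n+1))
    rw [pow_two] at this
    simpa [Nat.succ_eq_add_one] using this
  have hss : Nat.sqrt (2*(n+1)) * Nat.sqrt (2*(n+1)) ≤ 2*(n+1) := Nat.sqrt_le _
  obtain ⟨s, hs⟩ : ∃ s, s = Nat.sqrt (2*(n+1)) := ⟨_, rfl⟩
  rw [← hs] at hs2 hss ⊢
  have h16 : 16 * s ≤ 2*(n+1) + 64 := le_trans (amgm16 s) (by omega)
  set m : ℕ := s + 4 with hm
  have hmn : m + 4 ≤ n := by omega
  set J : ℕ := n - m with hJ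
  -- growth of terms
  have htgrow : ∀ j, j ≤ J → 2 * (n.choose j * beta j) ≤ n.choose (j+2) * beta (j+2) := by
    intro j hj
    have hjn : j + m ≤ n := by omega
    have hineq : 2 * (j+2) ≤ (n-j) * (n-j-1) := by
      calc 2 * (j+2) ≤ 2*(n+1) := by omega
        _ ≤ (s+1) * (s+1) := le_of_lt hs2
        _ ≤ (n-j) * (n-j-1) := Nat.mul_le_mul (by omega) (by omega)
    have hb : (j+1) * beta j ≤ beta (j+2) := beta_two_step j
    have hcc : n.choose (j+2) * ((j+2)*(j+1)) = n.choose j * ((n-j) * (n-j-1)) := by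
      have e1 : n.choose (j+1) * (j+1) = n.choose j * (n - j) := Nat.choose_succ_right_eq n j
      have e2 : n.choose (j+2) * (j+2) = n.choose (j+1) * (n - (j+1)) := Nat.choose_succ_right_eq n (j+1)
      have e3 : n - (j+1) = n - j - 1 := by omega
      rw [e3] at e2
      calc n.choose (j+2) * ((j+2)*(j+1)) = (n.choose (j+2) * (j+2)) * (j+1) := by ring
        _ = (n.choose (j+1) * (j+1)) * (n-j-1) := by rw [e2]; ring
        _ = (n.choose j * (n-j)) * (n-j-1) := by rw [e1]
        _ = n.choose j * ((n-j)*(n-j-1)) := by ring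
    have hmain : ((j+2)*(j+1)) * (2 * (n.choose j * beta j)) ≤ ((j+2)*(j+1)) * (n.choose (j+2) * beta (j+2)) := by
      calc ((j+2)*(j+1)) * (2 * (n.choose j * beta j))
          = (n.choose j * (2*(j+2))) * ((j+1) * beta j) := by ring
        _ ≤ (n.choose j * ((n-j)*(n-j-1))) * beta (j+2) :=
            Nat.mul_le_mul (Nat.mul_le_mul_left _ hineq) hb
        _ = (n.choose (j+2) * ((j+2)*(j+1))) * beta (j+2) := by rw [hcc]
        _ = ((j+2)*(j+1)) * (n.choose (j+2) * beta (j+2)) := by ring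
    exact Nat.le_of_mul_le_mul_left hmain (by positivity)
  -- geometric bound for the low part
  have hgeom : ∀ (K : ℕ), (∀ j, j ≤ K → 2 * (n.choose j * beta j) ≤ n.choose (j+2) * beta (j+2)) →
      ∑ j ∈ range (K+1), n.choose j * beta j
        ≤ n.choose (K+1) * beta (K+1) + n.choose (K+2) * beta (K+2) := by
    intro K
    induction K with
    | zero =>
      intro h
      have h0 := h 0 (le_refl 0)
      rw [Finset.sum_range_one]
      omega
    | succ L ih =>
      intro h
      have hL := ih (fun j hj => h j (by omega))
      rw [Finset.sum_range_succ]
      have h2 := h (L+1) (by omega)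
      have e1 : L+1+1 = L+2 := rfl
      have e2 : L+1+2 = L+3 := rfl
      rw [e2] at h2
      have e3 : L+2+1 = L+3 := rfl
      rw [e1, e3]
      omega
  have hlow : ∑ j ∈ range (J+1), n.choose j * beta j
      ≤ n.choose (J+1) * beta (J+1) + n.choose (J+2) * beta (J+2) := hgeom J htgrow
  -- split the sum for beta (n+1)
  have hsplit : beta (n+1) = (∑ j ∈ range (J+1), n.choose j * beta j)
      + ∑ j ∈ Ico (J+1) n, n.choose j * beta j := by
    rw [beta_succ n, Finset.range_eq_Ico,
      ← Finset.sum_Ico_consecutive (fun j => n.choose j * beta j) (by omega : 0 ≤ J+1) (by omega : J+1 ≤ n),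
      ← Finset.range_eq_Ico]
  have hpair : n.choose (J+1) * beta (J+1) + n.choose (J+2) * beta (J+2)
      ≤ ∑ j ∈ Ico (J+1) n, n.choose j * beta j := by
    have hsub : ({J+1, J+2} : Finset ℕ) ⊆ Ico (J+1) n := by
      intro x hx
      rw [Finset.mem_insert, Finset.mem_singleton] at hx
      rw [Finset.mem_Ico]
      rcases hx with rfl | rfl <;> omega
    calc n.choose (J+1) * beta (J+1) + n.choose (J+2) * beta (J+2)
        = ∑ j ∈ ({J+1, J+2} : Finset ℕ), n.choose j * beta j :=
          (Finset.sum_pair (f := fun j => n.choose j * beta j) (by omega : J+1 ≠ J+2)).symm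
      _ ≤ ∑ j ∈ Ico (J+1) n, n.choose j * beta j :=
          Finset.sum_le_sum_of_subset hsub
  have hhalf : beta (n+1) ≤ 2 * ∑ j ∈ Ico (J+1) n, n.choose j * beta j := by
    rw [hsplit, two_mul]
    exact Nat.add_le_add (le_trans hlow hpair) (le_refl _)
  -- high part bound
  have hhigh : (n+1) * ∑ j ∈ Ico (J+1) n, n.choose j * beta j ≤ m * beta (n+2) := by
    have hid : ∀ j, (n+1) * (n.choose j * beta j) = (n+1-j) * ((n+1).choose j * beta j) := by
      intro j
      have e1 : (n+1) * n.choose j = (n+1).choose (j+1) * (j+1) := Nat.add_one_mul_choose_eq n j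
      have e2 : (n+1).choose (j+1) * (j+1) = (n+1).choose j * (n+1-j) := Nat.choose_succ_right_eq (n+1) j
      calc (n+1) * (n.choose j * beta j) = ((n+1) * n.choose j) * beta j := by ring
        _ = ((n+1).choose j * (n+1-j)) * beta j := by rw [e1, e2]
        _ = (n+1-j) * ((n+1).choose j * beta j) := by ring
    calc (n+1) * ∑ j ∈ Ico (J+1) n, n.choose j * beta j
        = ∑ j ∈ Ico (J+1) n, (n+1) * (n.choose j * beta j) := Finset.mul_sum _ _ _
      _ ≤ ∑ j ∈ Ico (J+1) n, m * ((n+1).choose j * beta j) := by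
          apply Finset.sum_le_sum
          intro j hj
          rw [Finset.mem_Ico] at hj
          rw [hid j]
          exact Nat.mul_le_mul_right _ (by omega)
      _ = m * ∑ j ∈ Ico (J+1) n, (n+1).choose j * beta j := (Finset.mul_sum _ _ _).symm
      _ ≤ m * beta (n+2) := by
          apply Nat.mul_le_mul_left
          rw [beta_succ (n+1)]
          apply Finset.sum_le_sum_of_subset
          intro x hx
          rw [Finset.mem_Ico] at hx
          rw [Finset.mem_range]
          omega
  calc (n+1) * beta (n+1) ≤ (n+1) * (2 * ∑ j ∈ Ico (J+1) n, n.choose j * beta j) :=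
        Nat.mul_le_mul_left _ hhalf
    _ = 2 * ((n+1) * ∑ j ∈ Ico (J+1) n, n.choose j * beta j) := by ring
    _ ≤ 2 * (m * beta (n+2)) := Nat.mul_le_mul_left _ hhigh
    _ = 2 * m * beta (n+2) := by ring

lemma beta_doubling {n : ℕ} (hn : 64 ≤ n) : 2 * beta (n+1) ≤ beta (n+2) := by
  have hkey := key_growth hn
  have hs2 : 2*(n+1) < (Nat.sqrt (2*(n+1)) + 1) * (Nat.sqrt (2*(n+1)) + 1) := by
    have := Nat.lt_succ_sqrt' (2*(n+1))
    rw [pow_two] at this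
    simpa [Nat.succ_eq_add_one] using this
  have hss : Nat.sqrt (2*(n+1)) * Nat.sqrt (2*(n+1)) ≤ 2*(n+1) := Nat.sqrt_le _
  obtain ⟨s, hs⟩ : ∃ s, s = Nat.sqrt (2*(n+1)) := ⟨_, rfl⟩
  rw [← hs] at hs2 hss hkey
  have h16 : 16 * s ≤ 2*(n+1) + 64 := le_trans (amgm16 s) (by omega)
  have hm : 2 * (2 * (s + 4)) ≤ n + 1 := by omega
  have hfin : (n+1) * (2 * beta (n+1)) ≤ (n+1) * beta (n+2) := by
    calc (n+1) * (2 * beta (n+1)) = 2 * ((n+1) * beta (n+1)) := by ring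
      _ ≤ 2 * (2 * (s+4) * beta (n+2)) := Nat.mul_le_mul_left _ hkey
      _ = (2 * (2 * (s+4))) * beta (n+2) := by ring
      _ ≤ (n+1) * beta (n+2) := Nat.mul_le_mul_right _ hm
  exact Nat.le_of_mul_le_mul_left hfin (by omega)

end BetaGrowth
section Analysis
open Finset Filter

lemma beta_doubling' {K : ℕ} (hK : 65 ≤ K) : 2 * beta K ≤ beta (K+1) := by
  obtain ⟨j, rfl⟩ : ∃ j, K = j + 65 := ⟨K - 65, by omega⟩
  have h := beta_doubling (n := j + 64) (by omega)
  have e1 : j + 64 + 1 = j + 65 := by omega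
  have e2 : j + 64 + 2 = j + 65 + 1 := by omega
  rwa [e1, e2] at h

noncomputable def SbN (n : ℕ) : ℕ := ∑ k ∈ Icc 2 n, beta k

lemma sum_beta_le : ∀ K, 65 ≤ K → SbN K ≤ SbN 65 + 2 * beta K := by
  intro K hK
  induction K, hK using Nat.le_induction with
  | base => omega
  | succ K hK ih =>
    have hstep : SbN (K+1) = SbN K + beta (K+1) :=
      Finset.sum_Icc_succ_top (by omega) _
    have hd := beta_doubling' hK
    omega

lemma two_pow_le_beta : ∀ K, 65 ≤ K → 2^(K - 65) ≤ beta K := by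
  intro K hK
  induction K, hK using Nat.le_induction with
  | base => simpa using one_le_beta (by omega)
  | succ K hK ih =>
    have e : K + 1 - 65 = (K - 65) + 1 := by omega
    rw [e, pow_succ]
    have := beta_doubling' hK
    have h2 : 2 ^ (K - 65) * 2 = 2 * 2 ^ (K-65) := by ring
    rw [h2]
    calc 2 * 2^(K-65) ≤ 2 * beta K := Nat.mul_le_mul_left _ ih
      _ ≤ beta (K+1) := this

lemma beta_tendsto : Tendsto (fun m : ℕ => beta (m+2)) atTop atTop := by
  rw [tendsto_atTop_atTop]
  intro b
  refine ⟨b + 65, fun m hm => ?_⟩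
  have h1 : 2^(m + 2 - 65) ≤ beta (m+2) := two_pow_le_beta _ (by omega)
  have h2 : m + 2 - 65 < 2^(m+2-65) := Nat.lt_two_pow_self
  omega

lemma matsunaga_gt {n k : ℕ} (h : n < k) : matsunaga n k = 0 := by
  match n with
  | 0 => rfl
  | 1 => rfl
  | (m+2) =>
    rw [matsunaga, if_neg]
    omega

noncomputable def Trow (n : ℕ) : ℝ := ∑ k ∈ Icc 1 n, |(matsunaga n k : ℝ)|

lemma Trow_nonneg (n : ℕ) : 0 ≤ Trow n :=
  Finset.sum_nonneg fun k _ => abs_nonneg _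

lemma sum_abs_M (n : ℕ) : ∑ k ∈ Icc 1 (n+2), |(matsunaga (n+1) k : ℝ)| = Trow (n+1) := by
  rw [Finset.sum_Icc_succ_top (by omega : 1 ≤ n+2), matsunaga_gt (by omega : n+1 < n+2)]
  simp [Trow]

lemma Trow_bound (n : ℕ) :
    |Trow (n+2) - (beta (n+2) : ℝ) * ((n+2).factorial : ℝ)| ≤ ((n:ℝ)+2) * Trow (n+1) := by
  have hsum : (beta (n+2) : ℝ) * ((n+2).factorial : ℝ)
      = ∑ k ∈ Icc 1 (n+2), |(beta (n+2):ℝ) * ((stirS (n+2) k : ℤ):ℝ)| := by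
    have : ∀ k ∈ Icc 1 (n+2), |(beta (n+2):ℝ) * ((stirS (n+2) k : ℤ):ℝ)|
        = (beta (n+2):ℝ) * |((stirS (n+2) k : ℤ):ℝ)| := by
      intro k _
      rw [abs_mul, abs_of_nonneg (by positivity : (0:ℝ) ≤ (beta (n+2):ℝ))]
    rw [Finset.sum_congr rfl this, ← Finset.mul_sum, sum_abs_stirS (by omega : 1 ≤ n+2)]
  rw [Trow, hsum, ← Finset.sum_sub_distrib]
  have hM : ∀ k ∈ Icc 1 (n+2), (matsunaga (n+2) k : ℝ)
      = ((n:ℝ)+2) * (matsunaga (n+1) k : ℝ) + (beta (n+2):ℝ) * ((stirS (n+2) k : ℤ):ℝ) := by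
    intro k hk
    rw [Finset.mem_Icc] at hk
    rw [matsunaga, if_pos ⟨hk.1, hk.2⟩]
    push_cast
    ring
  calc |∑ k ∈ Icc 1 (n+2), (|(matsunaga (n+2) k : ℝ)| - |(beta (n+2):ℝ) * ((stirS (n+2) k : ℤ):ℝ)|)|
      ≤ ∑ k ∈ Icc 1 (n+2), |(|(matsunaga (n+2) k : ℝ)| - |(beta (n+2):ℝ) * ((stirS (n+2) k : ℤ):ℝ)|)| :=
        Finset.abs_sum_le_sum_abs _ _
    _ ≤ ∑ k ∈ Icc 1 (n+2), ((n:ℝ)+2) * |(matsunaga (n+1) k : ℝ)| := by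
        apply Finset.sum_le_sum
        intro k hk
        have h1 := abs_abs_sub_abs_le_abs_sub ((matsunaga (n+2) k : ℝ))
          ((beta (n+2):ℝ) * ((stirS (n+2) k : ℤ):ℝ))
        have h2 : (matsunaga (n+2) k : ℝ) - (beta (n+2):ℝ) * ((stirS (n+2) k : ℤ):ℝ)
            = ((n:ℝ)+2) * (matsunaga (n+1) k : ℝ) := by
          rw [hM k hk]; ring
        rw [h2] at h1
        calc |(|(matsunaga (n+2) k : ℝ)| - |(beta (n+2):ℝ) * ((stirS (n+2) k : ℤ):ℝ)|)|
            ≤ |((n:ℝ)+2) * (matsunaga (n+1) k : ℝ)| := h1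
          _ = ((n:ℝ)+2) * |(matsunaga (n+1) k : ℝ)| := by
              rw [abs_mul, abs_of_nonneg (by positivity : (0:ℝ) ≤ (n:ℝ)+2)]
    _ = ((n:ℝ)+2) * Trow (n+1) := by
        rw [← Finset.mul_sum, sum_abs_M]

noncomputable def Sb (n : ℕ) : ℝ := (SbN n : ℝ)

lemma Sb_nonneg (n : ℕ) : 0 ≤ Sb n := by rw [Sb]; positivity

lemma Trow_le : ∀ n : ℕ, Trow n ≤ (n.factorial : ℝ) * Sb n := by
  intro n
  induction n using Nat.strong_induction_on with
  | _ n ih =>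
    match n with
    | 0 => 
      have h : Trow 0 = 0 := by simp [Trow]
      rw [h]
      exact mul_nonneg (by positivity) (Sb_nonneg 0)
    | 1 =>
      have : Trow 1 = 0 := by
        rw [Trow]
        have : Icc 1 1 = {1} := rfl
        rw [this, Finset.sum_singleton]
        norm_num [matsunaga]
      rw [this]
      exact mul_nonneg (by positivity) (Sb_nonneg 1)
    | (n+2) =>
      have h1 := Trow_bound n
      have h2 : Trow (n+2) ≤ (beta (n+2):ℝ) * ((n+2).factorial : ℝ) + ((n:ℝ)+2) * Trow (n+1) := by
        have := (abs_le.mp h1).2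
        linarith
      have h3 := ih (n+1) (by omega)
      have hSb : Sb (n+2) = Sb (n+1) + (beta (n+2) : ℝ) := by
        rw [Sb, Sb, SbN, SbN, Finset.sum_Icc_succ_top (by omega : 2 ≤ n+2)]
        push_cast
        ring
      have hfac : ((n+2).factorial : ℝ) = ((n:ℝ)+2) * ((n+1).factorial : ℝ) := by
        rw [Nat.factorial_succ]
        push_cast
        ring
      have h4 : ((n:ℝ)+2) * Trow (n+1) ≤ ((n:ℝ)+2) * (((n+1).factorial : ℝ) * Sb (n+1)) := by
        apply mul_le_mul_of_nonneg_left h3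
        positivity
      rw [hSb, hfac]
      nlinarith [Sb_nonneg (n+1)]

lemma main_bound (m : ℕ) :
    |Trow (m+2) / ((beta (m+2):ℝ) * (((m+2).factorial : ℕ):ℝ)) - 1|
      ≤ Sb (m+1) / (beta (m+2):ℝ) := by
  have hβ : (1:ℝ) ≤ (beta (m+2) : ℝ) := by exact_mod_cast one_le_beta (by omega)
  have hfac : (0:ℝ) < (((m+2).factorial : ℕ):ℝ) := by
    exact_mod_cast (m+2).factorial_pos
  have hD : (0:ℝ) < (beta (m+2):ℝ) * (((m+2).factorial : ℕ):ℝ) := by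
    apply mul_pos (by linarith) hfac
  have heq : Trow (m+2) / ((beta (m+2):ℝ) * (((m+2).factorial : ℕ):ℝ)) - 1
      = (Trow (m+2) - (beta (m+2):ℝ) * (((m+2).factorial : ℕ):ℝ))
        / ((beta (m+2):ℝ) * (((m+2).factorial : ℕ):ℝ)) := by
    field_simp
  rw [heq, abs_div, abs_of_pos hD]
  have h1 := Trow_bound m
  have h2 := Trow_le (m+1)
  calc |Trow (m+2) - (beta (m+2):ℝ) * (((m+2).factorial : ℕ):ℝ)|
        / ((beta (m+2):ℝ) * (((m+2).factorial : ℕ):ℝ))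
      ≤ (((m:ℝ)+2) * ((((m+1).factorial : ℕ):ℝ) * Sb (m+1)))
        / ((beta (m+2):ℝ) * (((m+2).factorial : ℕ):ℝ)) := by
        apply (div_le_div_iff_of_pos_right hD).mpr
        refine le_trans h1 ?_
        exact mul_le_mul_of_nonneg_left h2 (by positivity)
    _ = Sb (m+1) / (beta (m+2):ℝ) := by
        have hfac2 : (((m+2).factorial : ℕ):ℝ) = ((m:ℝ)+2) * (((m+1).factorial : ℕ):ℝ) := by
          rw [Nat.factorial_succ]
          push_cast
          ring
        rw [hfac2]
        have hf1 : (0:ℝ) < (((m+1).factorial : ℕ):ℝ) := by exact_mod_cast (m+1).factorial_pos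
        field_simp

end Analysis
section Final
open Finset Filter

lemma sqrt_tendsto : Tendsto (fun m : ℕ => Nat.sqrt (2*(m+1))) atTop atTop := by
  rw [tendsto_atTop_atTop]
  intro b
  refine ⟨b*b, fun m hm => ?_⟩
  calc b = Nat.sqrt (b*b) := (Nat.sqrt_eq b).symm
    _ ≤ Nat.sqrt (2*(m+1)) := Nat.sqrt_le_sqrt (by omega)

lemma sqrt_cast_tendsto : Tendsto (fun m : ℕ => ((Nat.sqrt (2*(m+1)) : ℕ) : ℝ)) atTop atTop :=
  tendsto_natCast_atTop_atTop.comp sqrt_tendsto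

lemma piece2 : Tendsto (fun m : ℕ => ((Nat.sqrt (2*(m+1)) : ℕ) : ℝ) / ((m:ℝ)+1)) atTop (nhds 0) := by
  apply squeeze_zero' (g := fun m : ℕ => 2 / ((Nat.sqrt (2*(m+1)) : ℕ) : ℝ))
  · exact Eventually.of_forall fun m => by positivity
  · apply Eventually.of_forall
    intro m
    have hs1 : 1 ≤ Nat.sqrt (2*(m+1)) := by
      calc 1 = Nat.sqrt 2 := by norm_num [Nat.sqrt]
        _ ≤ Nat.sqrt (2*(m+1)) := Nat.sqrt_le_sqrt (by omega)
    have hs1' : (0:ℝ) < ((Nat.sqrt (2*(m+1)) : ℕ) : ℝ) := by exact_mod_cast hs1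
    have hm1 : (0:ℝ) < (m:ℝ)+1 := by positivity
    rw [div_le_div_iff₀ hm1 hs1']
    have := Nat.sqrt_le (2*(m+1))
    calc ((Nat.sqrt (2*(m+1)) : ℕ) : ℝ) * ((Nat.sqrt (2*(m+1)) : ℕ) : ℝ)
        ≤ ((2*(m+1) : ℕ) : ℝ) := by exact_mod_cast this
      _ = 2 * ((m:ℝ)+1) := by push_cast; ring
  · exact Tendsto.div_atTop tendsto_const_nhds sqrt_cast_tendsto

lemma beta_cast_tendsto : Tendsto (fun m : ℕ => ((beta (m+2) : ℕ) : ℝ)) atTop atTop :=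
  tendsto_natCast_atTop_atTop.comp beta_tendsto

noncomputable def Gbound (m : ℕ) : ℝ :=
  Sb 65 / ((beta (m+2) : ℕ) : ℝ)
    + (4 * (((Nat.sqrt (2*(m+1)) : ℕ) : ℝ) / ((m:ℝ)+1)) + 16 / ((m:ℝ)+1))

lemma Gbound_tendsto : Tendsto Gbound atTop (nhds 0) := by
  have h1 : Tendsto (fun m : ℕ => Sb 65 / ((beta (m+2) : ℕ) : ℝ)) atTop (nhds 0) :=
    Tendsto.div_atTop tendsto_const_nhds beta_cast_tendsto
  have h2 : Tendsto (fun m : ℕ => 4 * (((Nat.sqrt (2*(m+1)) : ℕ) : ℝ) / ((m:ℝ)+1))) atTop (nhds 0) := by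
    have := piece2.const_mul (4:ℝ)
    simpa using this
  have h3 : Tendsto (fun m : ℕ => 16 / ((m:ℝ)+1)) atTop (nhds 0) := by
    apply Tendsto.div_atTop tendsto_const_nhds
    exact tendsto_atTop_add_const_right _ 1 tendsto_natCast_atTop_atTop
  have := (h1.add (h2.add h3))
  simp only [add_zero] at this
  exact this

lemma eps_le_G {m : ℕ} (hm : 64 ≤ m) : Sb (m+1) / ((beta (m+2):ℕ) : ℝ) ≤ Gbound m := by
  have hkey := key_growth (n := m) hm
  set s : ℝ := ((Nat.sqrt (2*(m+1)) : ℕ) : ℝ) with hsdef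
  have hB2 : (1:ℝ) ≤ ((beta (m+2):ℕ) : ℝ) := by exact_mod_cast one_le_beta (by omega)
  have hB2pos : (0:ℝ) < ((beta (m+2):ℕ) : ℝ) := by linarith
  have hm1 : (0:ℝ) < (m:ℝ)+1 := by positivity
  have hre : ((m:ℝ)+1) * ((beta (m+1):ℕ) : ℝ) ≤ 2*(s+4) * ((beta (m+2):ℕ) : ℝ) := by
    rw [hsdef]
    exact_mod_cast hkey
  have hsum : Sb (m+1) ≤ Sb 65 + 2 * ((beta (m+1):ℕ) : ℝ) := by
    have := sum_beta_le (m+1) (by omega)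
    rw [Sb, Sb]
    exact_mod_cast this
  have hratio : ((beta (m+1):ℕ) : ℝ) / ((beta (m+2):ℕ) : ℝ) ≤ 2*(s+4) / ((m:ℝ)+1) := by
    rw [div_le_div_iff₀ hB2pos hm1]
    nlinarith
  calc Sb (m+1) / ((beta (m+2):ℕ) : ℝ)
      ≤ (Sb 65 + 2 * ((beta (m+1):ℕ) : ℝ)) / ((beta (m+2):ℕ) : ℝ) := by
        exact (div_le_div_iff_of_pos_right hB2pos).mpr hsum
    _ = Sb 65 / ((beta (m+2):ℕ) : ℝ) + 2 * (((beta (m+1):ℕ) : ℝ) / ((beta (m+2):ℕ) : ℝ)) := by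
        field_simp
    _ ≤ Sb 65 / ((beta (m+2):ℕ) : ℝ) + 2 * (2*(s+4) / ((m:ℝ)+1)) := by
        have := mul_le_mul_of_nonneg_left hratio (by norm_num : (0:ℝ) ≤ 2)
        linarith
    _ ≤ Gbound m := by
        rw [Gbound]
        have : 2 * (2*(s+4) / ((m:ℝ)+1)) = 4 * (s / ((m:ℝ)+1)) + 16 / ((m:ℝ)+1) := by
          field_simp
          ring
        rw [this]

lemma eps_tendsto : Tendsto (fun m : ℕ => Sb (m+1) / ((beta (m+2):ℕ) : ℝ)) atTop (nhds 0) := by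
  apply squeeze_zero' (g := Gbound)
  · exact Eventually.of_forall fun m => by
      apply div_nonneg (Sb_nonneg _) (by positivity)
  · filter_upwards [eventually_ge_atTop 64] with m hm
    exact eps_le_G hm
  · exact Gbound_tendsto

end Final

open Filter in
/-- `∑_{k=1}^{n} |M n k| ∼ beta n * n!` as `n → ∞`. -/
theorem matsunaga_abs_row_sum_asymptotic :
    Tendsto
      (fun n : ℕ =>
        (∑ k ∈ Finset.Icc 1 n, |(matsunaga n k : ℝ)|) /
          ((beta n : ℝ) * (n.factorial : ℝ)))
      atTop (nhds 1) := by
  rw [← tendsto_add_atTop_iff_nat 2]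
  rw [tendsto_iff_dist_tendsto_zero]
  apply squeeze_zero' (g := fun m : ℕ => Sb (m+1) / ((beta (m+2):ℕ) : ℝ))
  · exact Eventually.of_forall fun m => dist_nonneg
  · apply Eventually.of_forall
    intro m
    rw [Real.dist_eq]
    exact main_bound m
  · exact eps_tendsto
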